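/- Let D be a triangulated category, E ⊆ D an admissible subcategory, and (G, F) an adjoint pair of exact endofunctors such that F acts on E as an equivalence and nilpotently on E^⊥. For a natural number a, F^a(D) ⊆ E if and only if G^a(D) ⊆ E, and this holds if and only if G^a(^⊥E) = 0. -/

import Mathlib

/-!
Let `D` be a triangulated category, `E ⊆ D` an admissible subcategory, and `(G, F)` an
adjoint pair of exact endofunctors such that `F` acts on `E` as an equivalence and
nilpotently on `E^⊥`.  For a natural number `a`, `F^a(D) ⊆ E` if and only if
`G^a(D) ⊆ E`, and this holds if and only if `G^a(^⊥E) = 0`.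
-/

open CategoryTheory Limits CategoryTheory.Pretriangulated

namespace Stmt7

universe v u

variable {D : Type u} [Category.{v} D] [Preadditive D] [HasZeroObject D]
  [HasShift D ℤ] [∀ n : ℤ, (CategoryTheory.shiftFunctor D n).Additive] [Pretriangulated D]

/-- Iterated composition of an endofunctor. -/
def iter (F : D ⥤ D) : ℕ → D ⥤ D
  | 0 => 𝟭 D
  | n + 1 => iter F n ⋙ F

/-- The right orthogonal of a class of objects. -/
def rOrth (P : D → Prop) : D → Prop := fun d => ∀ e : D, P e → ∀ f : e ⟶ d, f = 0

/-- The left orthogonal of a class of objects. -/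
def lOrth (P : D → Prop) : D → Prop := fun d => ∀ e : D, P e → ∀ f : d ⟶ e, f = 0

/-!
Admissibility gives `E = (⊥E)^⊥ = ⊥(E^⊥)`: the fibre of the unit `X ⟶ ι L X` lies in `⊥E`
(and the cone of the counit `ι R X ⟶ X` in `E^⊥`), so an object orthogonal to it is a retract
of an object of `E`. Through the adjunction `G^a ⊣ F^a`, `F^a(D) ⊆ E` is then equivalent to
`G^a(⊥E) = 0`. If `F^a(D) ⊆ E`, then `F^a` kills `E^⊥`, which it preserves, so
`Hom(G^a d, E^⊥) = Hom(d, F^a E^⊥) = 0` and `G^a(D) ⊆ E`. Conversely `G` preserves `⊥E`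
because `F` preserves `E`, so `G^a(D) ⊆ E` forces `G^a(⊥E) ⊆ E ∩ ⊥E = 0`.
-/

section ZeroMorphisms

variable {C : Type*} [Category C] [HasZeroMorphisms C]

lemma isZero_of_prop_of_rightOrthogonal {P : ObjectProperty C} {X : C} (hX : P X)
    (hX' : P.rightOrthogonal X) : IsZero X :=
  (IsZero.iff_id_eq_zero X).2 (hX' (𝟙 X) hX)

lemma isZero_of_prop_of_leftOrthogonal {P : ObjectProperty C} {X : C} (hX : P X)
    (hX' : P.leftOrthogonal X) : IsZero X :=
  (IsZero.iff_id_eq_zero X).2 (hX' (𝟙 X) hX)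

end ZeroMorphisms

section Adjunction

variable {C E : Type*} [Category C] [Category E]

lemma Adjunction.unit_comp_bijective {L : C ⥤ E} {R : E ⥤ C} (adj : L ⊣ R)
    (hR : R.FullyFaithful) (X : C) (Z : E) :
    Function.Bijective (fun u : R.obj (L.obj X) ⟶ R.obj Z => adj.unit.app X ≫ u) := by
  rw [← Function.Bijective.of_comp_iff _ (hR.map_bijective _ _)]
  exact (adj.homEquiv X Z).bijective

lemma Adjunction.comp_counit_bijective {L : C ⥤ E} {R : E ⥤ C} (adj : L ⊣ R)
    (hL : L.FullyFaithful) (X : C) (Z : E) :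
    Function.Bijective (fun u : L.obj X ⟶ L.obj (R.obj Z) => u ≫ adj.counit.app Z) := by
  rw [← Function.Bijective.of_comp_iff _ (hL.map_bijective _ _)]
  exact (adj.homEquiv X Z).symm.bijective

variable [HasZeroMorphisms C] [HasZeroMorphisms E] {G : C ⥤ E} {F : E ⥤ C}

lemma Adjunction.homEquiv_eq_zero_iff (adj : G ⊣ F) {X : C} {Y : E} (f : G.obj X ⟶ Y) :
    adj.homEquiv X Y f = 0 ↔ f = 0 := by
  have := adj.isLeftAdjoint
  have := adj.isRightAdjoint
  refine ⟨fun h => ?_, fun h => ?_⟩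
  · rw [← (adj.homEquiv X Y).symm_apply_apply f, h, Adjunction.homEquiv_counit,
      G.map_zero, zero_comp]
  · rw [h, Adjunction.homEquiv_unit, F.map_zero, comp_zero]

lemma Adjunction.isZero_left_obj_iff (adj : G ⊣ F) (X : C) :
    IsZero (G.obj X) ↔ ∀ (Y : E) (f : X ⟶ F.obj Y), f = 0 := by
  refine ⟨fun h Y f => ?_, fun h => ?_⟩
  · rw [← (adj.homEquiv X Y).apply_symm_apply f, h.eq_of_src ((adj.homEquiv X Y).symm f) 0,
      Adjunction.homEquiv_eq_zero_iff adj]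
  · rw [IsZero.iff_id_eq_zero, ← Adjunction.homEquiv_eq_zero_iff adj]
    exact h _ _

lemma Adjunction.isZero_right_obj_iff (adj : G ⊣ F) (Y : E) :
    IsZero (F.obj Y) ↔ ∀ (X : C) (f : G.obj X ⟶ Y), f = 0 := by
  refine ⟨fun h X f => ?_, fun h => ?_⟩
  · rw [← Adjunction.homEquiv_eq_zero_iff adj]
    exact h.eq_of_tgt _ _
  · rw [IsZero.iff_id_eq_zero, ← (adj.homEquiv _ Y).apply_symm_apply (𝟙 _),
      h _ ((adj.homEquiv _ Y).symm (𝟙 _)), (Adjunction.homEquiv_eq_zero_iff adj _).2 rfl]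

lemma Adjunction.leftOrthogonal_left_obj (adj : G ⊣ F) {P : ObjectProperty C}
    {Q : ObjectProperty E} (hF : ∀ Y, Q Y → P (F.obj Y)) {X : C} (hX : P.leftOrthogonal X) :
    Q.leftOrthogonal (G.obj X) := fun Y f hY =>
  (Adjunction.homEquiv_eq_zero_iff adj f).1 (hX _ (hF Y hY))

end Adjunction

section Triangulated

variable {C : Type*} [Category C] [Preadditive C] [HasZeroObject C] [HasShift C ℤ]
  [∀ n : ℤ, (shiftFunctor C n).Additive] [Pretriangulated C] (P : ObjectProperty C)

lemma leftOrthogonal_obj₁_of_bijective [P.IsStableUnderShift ℤ] (T : Triangle C)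
    (hT : T ∈ distTriang C)
    (hT₂ : ∀ ⦃Y : C⦄, P Y → Function.Bijective (fun u : T.obj₃ ⟶ Y => T.mor₂ ≫ u)) :
    P.leftOrthogonal T.obj₁ := by
  intro Y φ hY
  have hφ : T.mor₃ ≫ φ⟦(1 : ℤ)⟧' = 0 :=
    (hT₂ (P.le_shift 1 Y hY)).1 (by simp [comp_distTriang_mor_zero₂₃_assoc _ hT])
  obtain ⟨g, hg⟩ := Triangle.yoneda_exact₃ _ (rot_of_distTriang _ hT) _ hφ
  obtain ⟨g₀, rfl⟩ := (shiftFunctor C (1 : ℤ)).map_surjective g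
  obtain ⟨u, rfl⟩ := (hT₂ hY).2 g₀
  change φ⟦(1 : ℤ)⟧' = (-T.mor₁⟦(1 : ℤ)⟧') ≫ (T.mor₂ ≫ u)⟦(1 : ℤ)⟧' at hg
  apply (shiftFunctor C (1 : ℤ)).map_injective
  rw [hg, Preadditive.neg_comp, ← Functor.map_comp, comp_distTriang_mor_zero₁₂_assoc _ hT,
    zero_comp, Functor.map_zero, neg_zero]

open Pretriangulated.Opposite in
lemma rightOrthogonal_obj₃_of_bijective [P.IsStableUnderShift ℤ] (T : Triangle C)
    (hT : T ∈ distTriang C)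
    (hT₁ : ∀ ⦃Y : C⦄, P Y → Function.Bijective (fun u : Y ⟶ T.obj₁ => u ≫ T.mor₁)) :
    P.rightOrthogonal T.obj₃ := by
  have h := leftOrthogonal_obj₁_of_bijective P.op _ (op_distinguished T hT) fun Y hY =>
    (opEquiv _ _).symm.bijective.comp ((hT₁ hY).comp (opEquiv _ _).bijective)
  intro Y f hY
  exact Quiver.Hom.op_inj (h f.op hY)

lemma mem_of_mem_rightOrthogonal_leftOrthogonal [P.IsStableUnderShift ℤ]
    [P.IsStableUnderRetracts] {L : C ⥤ P.FullSubcategory} (adj : L ⊣ P.ι) {X : C}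
    (hX : P.leftOrthogonal.rightOrthogonal X) : P X := by
  obtain ⟨W, f, g, hT⟩ := distinguished_cocone_triangle₁ (adj.unit.app X)
  have hf : f = 0 := hX f (leftOrthogonal_obj₁_of_bijective P _ hT fun Z hZ =>
    Adjunction.unit_comp_bijective adj P.fullyFaithfulι X ⟨Z, hZ⟩)
  obtain ⟨r, hr⟩ := Triangle.yoneda_exact₂ _ hT (𝟙 X) ((Category.comp_id f).trans hf)
  exact P.prop_of_retract ⟨_, r, hr.symm⟩ (L.obj X).property

lemma mem_of_mem_leftOrthogonal_rightOrthogonal [P.IsStableUnderShift ℤ]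
    [P.IsStableUnderRetracts] {R : C ⥤ P.FullSubcategory} (adj : P.ι ⊣ R) {X : C}
    (hX : P.rightOrthogonal.leftOrthogonal X) : P X := by
  obtain ⟨W, g, h, hT⟩ := distinguished_cocone_triangle (adj.counit.app X)
  have hg : g = 0 := hX g (rightOrthogonal_obj₃_of_bijective P _ hT fun Z hZ =>
    Adjunction.comp_counit_bijective adj P.fullyFaithfulι ⟨Z, hZ⟩ X)
  obtain ⟨s, hs⟩ := Triangle.coyoneda_exact₂ _ hT (𝟙 X) ((Category.id_comp g).trans hg)
  exact P.prop_of_retract ⟨s, _, hs.symm⟩ (R.obj X).property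

end Triangulated

lemma rOrth_eq_rightOrthogonal {C : Type*} [Category C] [Preadditive C] (P : C → Prop) :
    rOrth P = ObjectProperty.rightOrthogonal P := by
  ext d
  exact ⟨fun h e f he => h e he f, fun h e he f => h f he⟩

lemma lOrth_eq_leftOrthogonal {C : Type*} [Category C] [Preadditive C] (P : C → Prop) :
    lOrth P = ObjectProperty.leftOrthogonal P := by
  ext d
  exact ⟨fun h e f he => h e he f, fun h e he f => h f he⟩

lemma comp_iter_eq_iter_succ {C : Type*} [Category C] (F : C ⥤ C) :
    ∀ n : ℕ, F ⋙ iter F n = iter F (n + 1)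
  | 0 => rfl
  | n + 1 => by
      change F ⋙ (iter F n ⋙ F) = iter F (n + 1) ⋙ F
      rw [← Functor.assoc, comp_iter_eq_iter_succ F n]

def iterAdj {C : Type*} [Category C] {F G : C ⥤ C} (adj : G ⊣ F) :
    ∀ n : ℕ, iter G n ⊣ iter F n
  | 0 => Adjunction.id
  | n + 1 => ((iterAdj adj n).comp adj).ofNatIsoRight (eqToIso (comp_iter_eq_iter_succ F n))

lemma prop_iter_obj {C : Type*} [Category C] {P : C → Prop} {F : C ⥤ C}
    (hF : ∀ X, P X → P (F.obj X)) : ∀ (n : ℕ) (X : C), P X → P ((iter F n).obj X)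
  | 0, _, hX => hX
  | n + 1, X, hX => hF _ (prop_iter_obj hF n X hX)

theorem power_in_E_iff_left_adjoint_power_in_E_general
    (P : D → Prop)
    -- `E` is a thick subcategory:
    (hP_shift : ∀ (X : D) (n : ℤ), P X → P (X⟦n⟧))
    (hP_retract : ∀ (X Z : D), P Z → ∀ (i : X ⟶ Z) (r : Z ⟶ X), i ≫ r = 𝟙 X → P X)
    -- `E` is admissible:
    (_hadm_right : (ObjectProperty.ι P).IsLeftAdjoint)
    (_hadm_left : (ObjectProperty.ι P).IsRightAdjoint)
    -- `(G, F)` an adjoint pair of exact endofunctors: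
    (F G : D ⥤ D)
    (adj : G ⊣ F)
    -- `F` restricts to an autoequivalence of `E`:
    (hFP : ∀ d : D, P d → P (F.obj d))
    -- `F` acts nilpotently on `E^⊥`:
    (hFperp : ∀ d : D, rOrth P d → rOrth P (F.obj d))
    (a : ℕ) :
    ((∀ d : D, P ((iter F a).obj d)) ↔ (∀ d : D, P ((iter G a).obj d))) ∧
      ((∀ d : D, P ((iter F a).obj d)) ↔
        (∀ d : D, lOrth P d → IsZero ((iter G a).obj d))) := by
  have : ObjectProperty.IsStableUnderShift P ℤ := ⟨fun n => ⟨fun X hX => hP_shift X n hX⟩⟩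
  have : ObjectProperty.IsStableUnderRetracts P :=
    ⟨fun h hY => hP_retract _ _ hY h.i h.r h.retract⟩
  obtain ⟨L, ⟨adjL⟩⟩ := _hadm_left.exists_leftAdjoint
  obtain ⟨R, ⟨adjR⟩⟩ := _hadm_right.exists_rightAdjoint
  rw [rOrth_eq_rightOrthogonal] at hFperp
  rw [lOrth_eq_leftOrthogonal]
  have hF_imp_kill : (∀ d, P ((iter F a).obj d)) →
      ∀ d, ObjectProperty.leftOrthogonal P d → IsZero ((iter G a).obj d) :=
    fun h d hd => (Adjunction.isZero_left_obj_iff (iterAdj adj a) d).2 fun Y f => hd f (h Y)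
  have hkill_imp_F : (∀ d, ObjectProperty.leftOrthogonal P d → IsZero ((iter G a).obj d)) →
      ∀ d, P ((iter F a).obj d) :=
    fun h d => mem_of_mem_rightOrthogonal_leftOrthogonal P adjL fun c f hc =>
      (Adjunction.isZero_left_obj_iff (iterAdj adj a) c).1 (h c hc) d f
  have hF_imp_G : (∀ d, P ((iter F a).obj d)) → ∀ d, P ((iter G a).obj d) :=
    fun h d => mem_of_mem_leftOrthogonal_rightOrthogonal P adjR fun p f hp =>
      (Adjunction.isZero_right_obj_iff (iterAdj adj a) p).1
        (isZero_of_prop_of_rightOrthogonal (h p) (prop_iter_obj hFperp a p hp)) d f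
  have hG_imp_kill : (∀ d, P ((iter G a).obj d)) →
      ∀ d, ObjectProperty.leftOrthogonal P d → IsZero ((iter G a).obj d) :=
    fun h d hd => isZero_of_prop_of_leftOrthogonal (h d)
      (prop_iter_obj (fun _ hX => Adjunction.leftOrthogonal_left_obj adj hFP hX) a d hd)
  exact ⟨⟨hF_imp_G, hkill_imp_F ∘ hG_imp_kill⟩, ⟨hF_imp_kill, hkill_imp_F⟩⟩

theorem power_in_E_iff_left_adjoint_power_in_E
    (P : D → Prop)
    -- `E` is a thick subcategory:
    (hP_iso : ∀ {X Y : D}, (X ≅ Y) → P X → P Y)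
    (hP_shift : ∀ (X : D) (n : ℤ), P X → P (X⟦n⟧))
    (hP_tri : ∀ T ∈ distTriang D, P T.obj₁ → P T.obj₂ → P T.obj₃)
    (hP_retract : ∀ (X Z : D), P Z → ∀ (i : X ⟶ Z) (r : Z ⟶ X), i ≫ r = 𝟙 X → P X)
    -- `E` is admissible:
    (_hadm_right : (ObjectProperty.ι P).IsLeftAdjoint)
    (_hadm_left : (ObjectProperty.ι P).IsRightAdjoint)
    -- `(G, F)` an adjoint pair of exact endofunctors:
    (F G : D ⥤ D) [F.CommShift ℤ] [F.IsTriangulated] [G.CommShift ℤ] [G.IsTriangulated]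
    (adj : G ⊣ F)
    -- `F` restricts to an autoequivalence of `E`:
    (hFP : ∀ d : D, P d → P (F.obj d))
    (hFE : (ObjectProperty.lift P (ObjectProperty.ι P ⋙ F)
      (fun X => hFP X.1 X.2)).IsEquivalence)
    -- `F` acts nilpotently on `E^⊥`:
    (hFperp : ∀ d : D, rOrth P d → rOrth P (F.obj d))
    (hnilp : ∃ b : ℕ, ∀ d : D, rOrth P d → IsZero ((iter F b).obj d))
    (a : ℕ) :
    ((∀ d : D, P ((iter F a).obj d)) ↔ (∀ d : D, P ((iter G a).obj d))) ∧
      ((∀ d : D, P ((iter F a).obj d)) ↔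
        (∀ d : D, lOrth P d → IsZero ((iter G a).obj d))) :=
  power_in_E_iff_left_adjoint_power_in_E_general P hP_shift hP_retract _hadm_right _hadm_left F G
    adj hFP hFperp a

end Stmt7
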